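/- arXiv:1807.08224 — 6 statements merged into one kernel-verified Lean document; each statement's English description precedes it below -/
import Mathlib

section
/- Let $n \ge 2$, $A$ positive definite symmetric $n\times n$, $\alpha^2(y) = y^T A y$, $\beta(y) = b^T y$ with $b \ne 0$, $b^2 = b^T A^{-1} b$. Then the polynomial $b^2\alpha^2 - \beta^2$ does not divide the polynomial $P(y) = \alpha^2\{(3n-5)b^4\alpha^4 + (43n-59)b^2\alpha^2\beta^2 + 2(19n-34)\beta^4\}$ in $\mathbb{R}[y_1,\dots,y_n]$ when $n \ge 2$. -/
/-!
At `y₀ = A⁻¹ b` both `α²(y₀) = y₀ᵀ A y₀` and `β(y₀) = bᵀ A⁻¹ b` equal `b²`, so the divisor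
`b²α² - β²` vanishes at `y₀`, whereas `P(y₀) = 12 (7n - 11) b¹⁰`, which is nonzero because
`b² > 0` and `7n ≠ 11` for every natural number `n`.
-/

open Matrix MvPolynomial

noncomputable def quadPoly {n : ℕ} (A : Matrix (Fin n) (Fin n) ℝ) : MvPolynomial (Fin n) ℝ :=
  ∑ i, ∑ j, C (A i j) * X i * X j

noncomputable def linPoly {n : ℕ} (b : Fin n → ℝ) : MvPolynomial (Fin n) ℝ :=
  ∑ i, C (b i) * X i

section

variable {n : ℕ}

lemma eval_quadPoly (A : Matrix (Fin n) (Fin n) ℝ) (y : Fin n → ℝ) :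
    eval y (quadPoly A) = y ⬝ᵥ A *ᵥ y := by
  simp only [quadPoly, eval_sum, dotProduct, mulVec, map_mul, eval_C, eval_X, Finset.mul_sum]
  exact Finset.sum_congr rfl fun i _ => Finset.sum_congr rfl fun j _ => by ring

lemma eval_linPoly (b y : Fin n → ℝ) : eval y (linPoly b) = b ⬝ᵥ y := by
  simp [linPoly, dotProduct]

lemma eval_quadPoly_inv_mulVec {A : Matrix (Fin n) (Fin n) ℝ} (hA : IsUnit A.det)
    (b : Fin n → ℝ) : eval (A⁻¹ *ᵥ b) (quadPoly A) = b ⬝ᵥ A⁻¹ *ᵥ b := by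
  rw [eval_quadPoly, mulVec_mulVec, mul_nonsing_inv A hA, one_mulVec, dotProduct_comm]

lemma MvPolynomial.eval_eq_zero_of_dvd_of_eval_eq_zero {σ R : Type*} [CommSemiring R] {p q : MvPolynomial σ R}
    (x : σ → R) (hpq : p ∣ q) (hp : eval x p = 0) : eval x q = 0 :=
  zero_dvd_iff.mp (hp ▸ map_dvd (eval x) hpq)

end

theorem stmt5_general {n : ℕ} (A : Matrix (Fin n) (Fin n) ℝ) (hA : A.PosDef)
    (b : Fin n → ℝ) (hb : b ≠ 0) (b2 : ℝ) (hb2 : b2 = b ⬝ᵥ A⁻¹ *ᵥ b) :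
    ¬ ((C b2 * quadPoly A - (linPoly b) ^ 2) ∣
      quadPoly A *
        (C ((3 * (n : ℝ) - 5) * b2 ^ 2) * (quadPoly A) ^ 2 +
          C ((43 * (n : ℝ) - 59) * b2) * quadPoly A * (linPoly b) ^ 2 +
          C (2 * (19 * (n : ℝ) - 34)) * (linPoly b) ^ 4)) := by
  intro hdvd
  have hα : eval (A⁻¹ *ᵥ b) (quadPoly A) = b2 := by
    rw [hb2, eval_quadPoly_inv_mulVec (isUnit_iff_ne_zero.mpr hA.det_pos.ne')]
  have hβ : eval (A⁻¹ *ᵥ b) (linPoly b) = b2 := by rw [eval_linPoly, hb2]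
  have hb2_pos : 0 < b2 := hb2 ▸ hA.inv.dotProduct_mulVec_pos hb
  have h7n : (7 * n : ℝ) ≠ 11 := by exact_mod_cast (by omega : 7 * n ≠ 11)
  have hP := eval_eq_zero_of_dvd_of_eval_eq_zero (A⁻¹ *ᵥ b) hdvd (by simp [hα, hβ]; ring)
  simp only [map_mul, map_add, map_pow, eval_C, hα, hβ] at hP
  have hP' : 12 * (7 * n - 11) * b2 ^ 5 = 0 := by linear_combination hP
  simp [hb2_pos.ne', sub_eq_zero, h7n] at hP'

/-- For `n ≥ 2`, the polynomial `b²α² - β²` does not divide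
`P = α²{(3n-5)b⁴α⁴ + (43n-59)b²α²β² + 2(19n-34)β⁴}`. -/
theorem stmt5 {n : ℕ} (hn : 2 ≤ n) (A : Matrix (Fin n) (Fin n) ℝ) (hA : A.PosDef)
    (b : Fin n → ℝ) (hb : b ≠ 0) (b2 : ℝ) (hb2 : b2 = b ⬝ᵥ A⁻¹ *ᵥ b) :
    ¬ ((C b2 * quadPoly A - (linPoly b) ^ 2) ∣
      quadPoly A *
        (C ((3 * (n : ℝ) - 5) * b2 ^ 2) * (quadPoly A) ^ 2 +
          C ((43 * (n : ℝ) - 59) * b2) * quadPoly A * (linPoly b) ^ 2 +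
          C (2 * (19 * (n : ℝ) - 34)) * (linPoly b) ^ 4)) :=
  stmt5_general A hA b hb b2 hb2
end

section
/- Let $n \ge 3$, $A$ positive definite symmetric $n \times n$, $b \ne 0$, $b^2 = b^T A^{-1} b$, $\alpha^2(y)=y^TAy$, $\beta(y)=b^Ty$. Suppose $R(y) = y^T M y$ is a quadratic form (M symmetric) such that the polynomial $b^4 R(y) - 2 b^2 \beta(y) \rho(y) + \beta(y)^2 r$ is divisible by $b^2\alpha^2 - \beta^2$, where $\rho(y) = (M A^{-1} b)^T y$ and $r = b^T A^{-1} M A^{-1} b$. Then there exists $c \in \mathbb{R}$ such that $b^4 R - 2b^2\beta\rho + \beta^2 r = c\, b^2 (b^2\alpha^2 - \beta^2)$, and consequently there exist $c, d \in \mathbb{R}$ and a linear form $\theta$ with $\theta(A^{-1}b) = 0$ such that $R = c\,\alpha^2 + d\,\beta^2 + 2\beta\theta$. -/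
/-!
Both the projected form `P = b⁴R - 2b²βρ + β²r` and `Q = b²α² - β²` are homogeneous quadratics,
so in the domain `ℝ[y]` the quotient of `Q ∣ P` has total degree `0`: `P = e Q` with `e = c b²`.
As `A⁻¹` is positive definite, `b² > 0`, and dividing by `b⁴` solves for
`R = cα² + dβ² + 2βθ` with `θ = ρ/b² - (r/b⁴)β`. Symmetry of `A⁻¹` gives `ρ(A⁻¹b) = r`,
hence `θ(A⁻¹b) = r/b² - r/b² = 0`.
-/

open Matrix MvPolynomial

namespace MvPolynomial

theorem IsHomogeneous.exists_eq_C_mul_of_dvd {σ R : Type*} [CommRing R] [IsDomain R]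
    {P Q : MvPolynomial σ R} {m : ℕ} (hP : P.IsHomogeneous m) (hQ : Q.IsHomogeneous m)
    (h : Q ∣ P) : ∃ c, P = C c * Q := by
  obtain ⟨q, rfl⟩ := h
  rcases eq_or_ne Q 0 with rfl | hQ0
  · exact ⟨0, by simp⟩
  rcases eq_or_ne q 0 with rfl | hq0
  · exact ⟨0, by simp⟩
  have hdeg : q.totalDegree = 0 := by
    have := hP.totalDegree_le
    rw [totalDegree_mul_of_isDomain hQ0 hq0, hQ.totalDegree hQ0] at this
    omega
  exact ⟨q.coeff 0, by rw [mul_comm, ← totalDegree_eq_zero_iff_eq_C.mp hdeg]⟩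

end MvPolynomial

theorem Matrix.IsSymm.dotProduct_mulVec_comm {ι R : Type*} [Fintype ι] [CommSemiring R]
    {S : Matrix ι ι R} (hS : S.IsSymm) (v w : ι → R) : v ⬝ᵥ S *ᵥ w = (S *ᵥ v) ⬝ᵥ w := by
  rw [dotProduct_mulVec, ← mulVec_transpose, hS.eq]

theorem isHomogeneous_quadPoly {n : ℕ} (A : Matrix (Fin n) (Fin n) ℝ) :
    (quadPoly A).IsHomogeneous 2 :=
  IsHomogeneous.sum _ _ _ fun i _ => IsHomogeneous.sum _ _ _ fun j _ =>
    ((isHomogeneous_C _ (A i j)).mul (isHomogeneous_X _ i)).mul (isHomogeneous_X _ j)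

theorem isHomogeneous_linPoly {n : ℕ} (b : Fin n → ℝ) : (linPoly b).IsHomogeneous 1 :=
  IsHomogeneous.sum _ _ _ fun i _ => (isHomogeneous_C _ (b i)).mul (isHomogeneous_X _ i)

theorem linPoly_sub {n : ℕ} (u v : Fin n → ℝ) : linPoly (u - v) = linPoly u - linPoly v := by
  simp only [linPoly, Pi.sub_apply, C_sub, sub_mul, Finset.sum_sub_distrib]

theorem linPoly_smul {n : ℕ} (a : ℝ) (u : Fin n → ℝ) : linPoly (a • u) = C a * linPoly u := by
  simp only [linPoly, Pi.smul_apply, smul_eq_mul, C_mul, mul_assoc, Finset.mul_sum]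

theorem eq_of_sq_mul_sub_eq {S : Type*} [CommRing S] {B u R α β ρ r c : S} (hu : B * u = 1)
    (h : B ^ 2 * R - 2 * B * β * ρ + r * β ^ 2 = c * B * (B * α - β ^ 2)) :
    R = c * α + (r * u ^ 2 - c * u) * β ^ 2 + 2 * β * (u * ρ - r * u ^ 2 * β) := by
  -- multiply `h` by `u²`, then replace each `B * u` by `1`
  linear_combination
    u ^ 2 * h - ((R - c * α) * (1 + B * u) + c * u * β ^ 2 - 2 * u * β * ρ) * hu

theorem stmt6_general {n : ℕ} (A : Matrix (Fin n) (Fin n) ℝ) (hA : A.PosDef)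
    (b : Fin n → ℝ) (hb : b ≠ 0) (b2 : ℝ) (hb2 : b2 = b ⬝ᵥ A⁻¹ *ᵥ b)
    (M : Matrix (Fin n) (Fin n) ℝ)
    (hdvd : (C b2 * quadPoly A - (linPoly b) ^ 2) ∣
      (C (b2 ^ 2) * quadPoly M -
        C (2 * b2) * linPoly b * linPoly (M *ᵥ (A⁻¹ *ᵥ b)) +
        C (b ⬝ᵥ A⁻¹ *ᵥ (M *ᵥ (A⁻¹ *ᵥ b))) * (linPoly b) ^ 2)) :
    (∃ c : ℝ,
      C (b2 ^ 2) * quadPoly M -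
        C (2 * b2) * linPoly b * linPoly (M *ᵥ (A⁻¹ *ᵥ b)) +
        C (b ⬝ᵥ A⁻¹ *ᵥ (M *ᵥ (A⁻¹ *ᵥ b))) * (linPoly b) ^ 2 =
      C (c * b2) * (C b2 * quadPoly A - (linPoly b) ^ 2)) ∧
    ∃ c d : ℝ, ∃ t : Fin n → ℝ, t ⬝ᵥ (A⁻¹ *ᵥ b) = 0 ∧
      quadPoly M = C c * quadPoly A + C d * (linPoly b) ^ 2 +
        2 * linPoly b * linPoly t := by
  set w := A⁻¹ *ᵥ b
  set r := b ⬝ᵥ A⁻¹ *ᵥ (M *ᵥ w)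
  have hb2pos : 0 < b2 := hb2 ▸ hA.inv.dotProduct_mulVec_pos hb
  have hQ : (C b2 * quadPoly A - linPoly b ^ 2).IsHomogeneous 2 :=
    ((isHomogeneous_C _ _).mul (isHomogeneous_quadPoly A)).sub ((isHomogeneous_linPoly b).pow 2)
  have hP : (C (b2 ^ 2) * quadPoly M - C (2 * b2) * linPoly b * linPoly (M *ᵥ w) +
      C r * linPoly b ^ 2).IsHomogeneous 2 :=
    (((isHomogeneous_C _ _).mul (isHomogeneous_quadPoly M)).sub
      (((isHomogeneous_C _ _).mul (isHomogeneous_linPoly b)).mul (isHomogeneous_linPoly _))).add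
      ((isHomogeneous_C _ _).mul ((isHomogeneous_linPoly b).pow 2))
  obtain ⟨e, he⟩ := hP.exists_eq_C_mul_of_dvd hQ hdvd
  rw [← div_mul_cancel₀ e hb2pos.ne'] at he
  set c := e / b2
  refine ⟨⟨c, he⟩, c, r * b2⁻¹ ^ 2 - c * b2⁻¹, b2⁻¹ • (M *ᵥ w) - (r * b2⁻¹ ^ 2) • b, ?_, ?_⟩
  · have hr : (M *ᵥ w) ⬝ᵥ w = r := (dotProduct_comm _ _).trans
      ((isHermitian_iff_isSymm.mp hA.isHermitian).inv.dotProduct_mulVec_comm b _).symm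
    rw [sub_dotProduct, smul_dotProduct, smul_dotProduct, smul_eq_mul, smul_eq_mul, hr, ← hb2]
    field_simp
    ring
  · rw [linPoly_sub, linPoly_smul, linPoly_smul]
    simp only [map_sub, map_mul, map_pow]
    have hu : C b2 * C b2⁻¹ = (1 : MvPolynomial (Fin n) ℝ) := by
      rw [← map_mul, mul_inv_cancel₀ hb2pos.ne', map_one]
    refine eq_of_sq_mul_sub_eq hu ?_
    simp only [map_pow, map_mul, map_ofNat] at he
    linear_combination he

/-- For `n ≥ 3`, if the quadratic polynomial
`b⁴R - 2b²βρ + β²r` is divisible by `b²α² - β²` (with `R = yᵀMy`, `M` symmetric,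
`ρ(y) = (MA⁻¹b)ᵀy`, `r = bᵀA⁻¹MA⁻¹b`), then the quotient is a constant
`c·b²`, and `R` decomposes as `cα² + dβ² + 2βθ` with `θ(A⁻¹b) = 0`. -/
theorem stmt6 {n : ℕ} (hn : 3 ≤ n) (A : Matrix (Fin n) (Fin n) ℝ) (hA : A.PosDef)
    (b : Fin n → ℝ) (hb : b ≠ 0) (b2 : ℝ) (hb2 : b2 = b ⬝ᵥ A⁻¹ *ᵥ b)
    (M : Matrix (Fin n) (Fin n) ℝ) (hM : M.IsSymm)
    (hdvd : (C b2 * quadPoly A - (linPoly b) ^ 2) ∣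
      (C (b2 ^ 2) * quadPoly M -
        C (2 * b2) * linPoly b * linPoly (M *ᵥ (A⁻¹ *ᵥ b)) +
        C (b ⬝ᵥ A⁻¹ *ᵥ (M *ᵥ (A⁻¹ *ᵥ b))) * (linPoly b) ^ 2)) :
    (∃ c : ℝ,
      C (b2 ^ 2) * quadPoly M -
        C (2 * b2) * linPoly b * linPoly (M *ᵥ (A⁻¹ *ᵥ b)) +
        C (b ⬝ᵥ A⁻¹ *ᵥ (M *ᵥ (A⁻¹ *ᵥ b))) * (linPoly b) ^ 2 =
      C (c * b2) * (C b2 * quadPoly A - (linPoly b) ^ 2)) ∧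
    ∃ c d : ℝ, ∃ t : Fin n → ℝ, t ⬝ᵥ (A⁻¹ *ᵥ b) = 0 ∧
      quadPoly M = C c * quadPoly A + C d * (linPoly b) ^ 2 +
        2 * linPoly b * linPoly t :=
  stmt6_general A hA b hb b2 hb2 M hdvd
end

section
/- Let $n = 2$, $A$ positive definite symmetric $2\times2$, $b \ne 0$, $b^2 = b^T A^{-1}b$, and write $b^2\alpha^2 - \beta^2 = \gamma^2$ for a nonzero linear form $\gamma$. Suppose symmetric bilinear data $r_{ij}$ (a symmetric $2\times2$ matrix), $r_i = b^m r_{mi}$ (with $b^m = (A^{-1}b)^m$), $r = b^i r_i$ satisfy: $b^4 r_{ij} - b^2(b_i r_j + b_j r_i) + r b_i b_j = \tfrac12(\gamma_i\delta_j + \gamma_j\delta_i)$ for some linear form $\delta$. Then $\gamma_i b^i = 0$, $\delta_i b^i = 0$, and $\delta$ is a scalar multiple of $\gamma$; hence $b^4 r_{00} - 2b^2\beta r_0 + \beta^2 r$ is a constant multiple of $b^2\alpha^2 - \beta^2$. -/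
open Matrix

/-- the dimension-2 case of Lemma 3.2. If
`b⁴r_{ij} - b²(b_i r_j + b_j r_i) + r b_i b_j = ½(γ_i δ_j + γ_j δ_i)`
with `b²α² - β² = γ²`, `γ ≠ 0`, then `γ` and `δ` are orthogonal to `b`
(indices raised by `A⁻¹`), `δ` is a multiple of `γ`, and
`b⁴r₀₀ - 2b²βr₀ + β²r` is a constant multiple of `b²α² - β²`. -/
theorem stmt7 (A : Matrix (Fin 2) (Fin 2) ℝ) (hA : A.PosDef)
    (b : Fin 2 → ℝ) (hb : b ≠ 0) (b2 : ℝ) (hb2 : b2 = b ⬝ᵥ A⁻¹ *ᵥ b)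
    (γ : Fin 2 → ℝ) (hγ : γ ≠ 0)
    (hγsq : ∀ y : Fin 2 → ℝ, b2 * (y ⬝ᵥ A *ᵥ y) - (b ⬝ᵥ y) ^ 2 = (γ ⬝ᵥ y) ^ 2)
    (R : Matrix (Fin 2) (Fin 2) ℝ) (hR : R.IsSymm) (δ : Fin 2 → ℝ)
    (hmain : ∀ i j, b2 ^ 2 * R i j -
        b2 * (b i * (R *ᵥ (A⁻¹ *ᵥ b)) j + b j * (R *ᵥ (A⁻¹ *ᵥ b)) i) +
        ((A⁻¹ *ᵥ b) ⬝ᵥ (R *ᵥ (A⁻¹ *ᵥ b))) * b i * b j =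
      (γ i * δ j + γ j * δ i) / 2) :
    γ ⬝ᵥ (A⁻¹ *ᵥ b) = 0 ∧ δ ⬝ᵥ (A⁻¹ *ᵥ b) = 0 ∧ (∃ k : ℝ, δ = k • γ) ∧
    ∃ c : ℝ, ∀ y : Fin 2 → ℝ,
      b2 ^ 2 * (y ⬝ᵥ R *ᵥ y) - 2 * b2 * (b ⬝ᵥ y) * ((R *ᵥ (A⁻¹ *ᵥ b)) ⬝ᵥ y) +
        (b ⬝ᵥ y) ^ 2 * ((A⁻¹ *ᵥ b) ⬝ᵥ (R *ᵥ (A⁻¹ *ᵥ b))) =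
      c * (b2 * (y ⬝ᵥ A *ᵥ y) - (b ⬝ᵥ y) ^ 2) := by
  have hAB : A *ᵥ (A⁻¹ *ᵥ b) = b := by
    rw [Matrix.mulVec_mulVec,
      Matrix.mul_nonsing_inv _ (isUnit_iff_ne_zero.mpr hA.det_pos.ne'), Matrix.one_mulVec]
  set B := A⁻¹ *ᵥ b with hBdef
  have hsym : R 0 1 = R 1 0 := by
    have := hR.apply 1 0
    simpa using this
  have hbB : b 0 * B 0 + b 1 * B 1 = b2 := by
    rw [hb2]; simp [dotProduct, Fin.sum_univ_two]
  -- γ ⬝ B = 0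
  have hγB : γ 0 * B 0 + γ 1 * B 1 = 0 := by
    have h := hγsq B
    rw [hAB] at h
    have h2 : (γ ⬝ᵥ B) ^ 2 = 0 := by
      rw [← h]
      simp only [dotProduct, Fin.sum_univ_two]
      linear_combination (-(b 0 * B 0 + b 1 * B 1)) * hbB
    have h3 : γ ⬝ᵥ B = 0 := (pow_eq_zero_iff two_ne_zero).mp h2
    simpa [dotProduct, Fin.sum_univ_two] using h3
  -- δ ⬝ B = 0
  have hδB : δ 0 * B 0 + δ 1 * B 1 = 0 := by
    have key0 : γ 0 * (δ 0 * B 0 + δ 1 * B 1) = 0 := by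
      have h0 := hmain 0 0
      have h1 := hmain 1 0
      simp only [dotProduct, mulVec, Fin.sum_univ_two] at h0 h1
      linear_combination (-2*B 0)*h0 + (-2*B 1)*h1 +
          (2*(B 0 * (R 0 0 * B 0 + R 0 1 * B 1) + B 1 * (R 1 0 * B 0 + R 1 1 * B 1))*b 0
            - 2*b2*(R 0 0 * B 0 + R 0 1 * B 1))*hbB +
          (-2*b2^2*B 1)*hsym + (-δ 0)*hγB
    have key1 : γ 1 * (δ 0 * B 0 + δ 1 * B 1) = 0 := by
      have h0 := hmain 0 1
      have h1 := hmain 1 1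
      simp only [dotProduct, mulVec, Fin.sum_univ_two] at h0 h1
      linear_combination (-2*B 0)*h0 + (-2*B 1)*h1 +
          (2*(B 0 * (R 0 0 * B 0 + R 0 1 * B 1) + B 1 * (R 1 0 * B 0 + R 1 1 * B 1))*b 1
            - 2*b2*(R 1 0 * B 0 + R 1 1 * B 1))*hbB +
          (2*b2^2*B 0)*hsym + (-δ 1)*hγB
    have hγne : γ 0 ≠ 0 ∨ γ 1 ≠ 0 := by
      by_contra h
      push_neg at h
      exact hγ (funext fun i => by fin_cases i <;> simp [h.1, h.2])
    rcases hγne with hj | hj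
    · exact (mul_eq_zero.mp key0).resolve_left hj
    · exact (mul_eq_zero.mp key1).resolve_left hj
  -- B ≠ 0
  have hBne : B 0 ≠ 0 ∨ B 1 ≠ 0 := by
    by_contra h
    push_neg at h
    apply hb
    rw [← hAB]
    funext i
    simp [mulVec, dotProduct, Fin.sum_univ_two, h.1, h.2]
  -- cross product vanishes
  have hcross : δ 0 * γ 1 = δ 1 * γ 0 := by
    rcases hBne with h | h
    · have : B 0 * (δ 0 * γ 1 - δ 1 * γ 0) = 0 := by linear_combination γ 1 * hδB - δ 1 * hγB
      have := (mul_eq_zero.mp this).resolve_left h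
      linarith
    · have : B 1 * (δ 0 * γ 1 - δ 1 * γ 0) = 0 := by
        linear_combination δ 0 * hγB - γ 0 * hδB
      have := (mul_eq_zero.mp this).resolve_left h
      linarith
  -- δ = k • γ
  obtain ⟨k, hk⟩ : ∃ k : ℝ, δ = k • γ := by
    by_cases h0 : γ 0 ≠ 0
    · refine ⟨δ 0 / γ 0, ?_⟩
      funext i
      fin_cases i
      · simp; field_simp
      · simp; field_simp; linear_combination -hcross
    · push_neg at h0
      have h1 : γ 1 ≠ 0 := by
        intro h1
        apply hγ
        funext i; fin_cases i <;> simp [h0, h1]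
      refine ⟨δ 1 / γ 1, ?_⟩
      funext i
      fin_cases i
      · simp [h0]
        have : δ 0 * γ 1 = 0 := by rw [hcross, h0]; ring
        exact (mul_eq_zero.mp this).resolve_right h1
      · simp; field_simp
  refine ⟨by simpa [dotProduct, Fin.sum_univ_two] using hγB,
    by simpa [dotProduct, Fin.sum_univ_two] using hδB, ⟨k, hk⟩, k, ?_⟩
  intro y
  have h := hγsq y
  have h00 := hmain 0 0
  have h01 := hmain 0 1
  have h10 := hmain 1 0
  have h11 := hmain 1 1
  subst hk
  simp only [dotProduct, mulVec, Fin.sum_univ_two, Pi.smul_apply, smul_eq_mul]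
    at h h00 h01 h10 h11 ⊢
  linear_combination (y 0 * y 0) * h00 + (y 0 * y 1) * h01 + (y 1 * y 0) * h10 +
    (y 1 * y 1) * h11 - k * h
end

section
/- Let $K \in \mathbb{R}$, $n \ge 2$, and let $\alpha^2, \beta$ be as usual ($A$ positive definite, $b\ne0$, $b^2 = b^TA^{-1}b$). If there is a polynomial $P(y)$ such that $\alpha^2 \cdot P(y) = 18(n-1)K b^4 \beta(y)^9$ identically in $y$, then $K = 0$. -/
/-!
Restrict both sides to the line `t ↦ y + t • b`, where `y ≠ 0` is Euclidean-orthogonal to `b`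
(possible as `n ≥ 2`). There `β` becomes `(b ⬝ᵥ b) t`, while `α²` becomes a quadratic in `t`
with constant term `α²(y) > 0` and leading coefficient `α²(b) > 0`. Since `t` is prime, a
divisor of a power of `t` with nonzero constant term is a unit, so `α² ∤ β⁹`; hence the
constant `18(n-1)K b⁴` must vanish.
-/

open Matrix MvPolynomial

theorem Polynomial.isUnit_of_dvd_X_pow {R : Type*} [CommRing R] [IsDomain R] {p : Polynomial R}
    {k : ℕ} (hp : p ∣ Polynomial.X ^ k) (h0 : p.coeff 0 ≠ 0) : IsUnit p := by
  obtain ⟨i, -, hi⟩ := (dvd_prime_pow Polynomial.prime_X k).mp hp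
  cases i with
  | zero => simpa using hi
  | succ i =>
    refine absurd (Polynomial.X_dvd_iff.mp ?_) h0
    exact (dvd_pow_self _ i.succ_ne_zero).trans hi.symm.dvd

section Line

variable {n : ℕ}

theorem aeval_line_linPoly (b y v : Fin n → ℝ) :
    aeval (fun k => Polynomial.C (y k) + Polynomial.C (v k) * Polynomial.X) (linPoly b) =
      Polynomial.C (y ⬝ᵥ b) + Polynomial.C (v ⬝ᵥ b) * Polynomial.X := by
  simp only [linPoly, map_sum, _root_.map_mul, aeval_C, aeval_X, Polynomial.algebraMap_eq,
    dotProduct, Finset.sum_mul, ← Finset.sum_add_distrib]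
  exact Finset.sum_congr rfl fun k _ => by ring

theorem aeval_line_quadPoly (A : Matrix (Fin n) (Fin n) ℝ) (y v : Fin n → ℝ) :
    aeval (fun k => Polynomial.C (y k) + Polynomial.C (v k) * Polynomial.X) (quadPoly A) =
      Polynomial.C (y ⬝ᵥ A *ᵥ y) + Polynomial.C (y ⬝ᵥ A *ᵥ v + v ⬝ᵥ A *ᵥ y) * Polynomial.X
        + Polynomial.C (v ⬝ᵥ A *ᵥ v) * Polynomial.X ^ 2 := by
  simp only [quadPoly, map_sum, _root_.map_mul, aeval_C, aeval_X, Polynomial.algebraMap_eq,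
    dotProduct, mulVec, Finset.mul_sum, Finset.sum_mul, ← Finset.sum_add_distrib,
    Polynomial.C_add]
  exact Finset.sum_congr rfl fun i _ => Finset.sum_congr rfl fun j _ => by ring

theorem quadPoly_not_dvd_linPoly_pow (hn : 2 ≤ n) {A : Matrix (Fin n) (Fin n) ℝ}
    (hA : A.PosDef) {b : Fin n → ℝ} (hb : b ≠ 0) (k : ℕ) : ¬ quadPoly A ∣ linPoly b ^ k := by
  intro hdvd
  have : Nontrivial (Fin n) := Fin.nontrivial_iff_two_le.mpr hn
  obtain ⟨y, hy, hyb⟩ := exists_ne_zero_dotProduct_eq_zero b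
  set σ : Fin n → Polynomial ℝ := fun i => Polynomial.C (y i) + Polynomial.C (b i) * Polynomial.X
  have hQ : aeval σ (quadPoly A) = _ := aeval_line_quadPoly A y b
  have hQ0 : (aeval σ (quadPoly A)).coeff 0 ≠ 0 := by
    simpa [hQ] using (hA.dotProduct_mulVec_pos hy).ne'
  have hQ2 : (aeval σ (quadPoly A)).coeff 2 ≠ 0 := by
    simpa [hQ] using (hA.dotProduct_mulVec_pos hb).ne'
  have hQX : aeval σ (quadPoly A) ∣ Polynomial.X ^ k := by
    have hbb : IsUnit (Polynomial.C ((b ⬝ᵥ b) ^ k)) :=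
      Polynomial.isUnit_C.mpr (pow_ne_zero k (dotProduct_self_eq_zero.not.mpr hb)).isUnit
    have hline := map_dvd (aeval σ) hdvd
    rwa [map_pow, aeval_line_linPoly, hyb, map_zero, zero_add, mul_pow, ← Polynomial.C_pow,
      hbb.dvd_mul_left] at hline
  have hdeg := Polynomial.natDegree_eq_zero_of_isUnit (Polynomial.isUnit_of_dvd_X_pow hQX hQ0)
  exact hQ2 (Polynomial.coeff_eq_zero_of_natDegree_lt (by omega))

end Line

/-- if `α² · P = 18(n-1)K b⁴ β⁹` identically (as polynomials),
with `n ≥ 2`, `A` positive definite, `b ≠ 0`, then `K = 0`. -/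
theorem stmt8 {n : ℕ} (hn : 2 ≤ n) (K : ℝ) (A : Matrix (Fin n) (Fin n) ℝ)
    (hA : A.PosDef) (b : Fin n → ℝ) (hb : b ≠ 0) (b2 : ℝ)
    (hb2 : b2 = b ⬝ᵥ A⁻¹ *ᵥ b) (P : MvPolynomial (Fin n) ℝ)
    (h : quadPoly A * P = C (18 * ((n : ℝ) - 1) * K * b2 ^ 2) * (linPoly b) ^ 9) :
    K = 0 := by
  by_contra hK
  have hb2_pos : 0 < b2 := by simpa [hb2] using hA.inv.dotProduct_mulVec_pos hb
  have hn1 : (n : ℝ) - 1 ≠ 0 := by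
    have : (2 : ℝ) ≤ n := by exact_mod_cast hn
    linarith
  have hc : IsUnit (C (18 * ((n : ℝ) - 1) * K * b2 ^ 2) : MvPolynomial (Fin n) ℝ) :=
    (isUnit_iff_ne_zero.mpr (by simp [hn1, hK, hb2_pos.ne'])).map C
  exact quadPoly_not_dvd_linPoly_pow hn hA hb 9 (hc.dvd_mul_left.mp ⟨P, h.symm⟩)
end

section
/- Let $n \ge 3$, $A$ positive definite symmetric $n\times n$, $b\ne0$, $b^2 = b^TA^{-1}b$, $\alpha^2(y)=y^TAy$, $\beta(y)=b^Ty$. Let $L(y)$ be a linear form. If the polynomial $2(5n+1)\beta^5 L^2$ is divisible by $b^2\alpha^2 - \beta^2$ in $\mathbb{R}[y_1,\dots,y_n]$, then $L = 0$. -/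
open Matrix MvPolynomial

/-!
Write `Q = b²α² - β²` and `u = A⁻¹b`, so that `⟪x, u⟫_A = β(x)` and `b² = β(u) > 0`.
If `v, w` lie in `ker β`, are `A`-orthogonal and have the same `A`-norm, then the complex point
`z = u + v + i w` satisfies `Q(z) = b²(α²(v) - α²(w)) + 2 i b² ⟪v, w⟫_A = 0` while `β(z) = b² ≠ 0`,
so the divisibility forces `L(z) = 0`. Taking `v = w = 0` gives `L(u) = 0`; for `n ≥ 3` every
`w ∈ ker β` has such a partner `v`, and the imaginary part gives `L(w) = 0`. Hence `L = 0`.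
-/

open Complex

theorem MvPolynomial.aeval_eq_zero_of_dvd_mul_pow {σ R K : Type*} [CommRing R] [CommRing K]
    [IsDomain K] [Algebra R K] {Q P L : MvPolynomial σ R} {m : ℕ} (h : Q ∣ P * L ^ m)
    {z : σ → K} (hQ : aeval z Q = 0) (hP : aeval z P ≠ 0) : aeval z L = 0 := by
  have := map_dvd (aeval z) h
  rw [hQ, zero_dvd_iff, map_mul, map_pow] at this
  exact eq_zero_of_pow_eq_zero ((mul_eq_zero.mp this).resolve_left hP)

variable {n : ℕ}

theorem aeval_linPoly_complex (b p q : Fin n → ℝ) :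
    aeval (fun i ↦ (p i : ℂ) + q i * I) (linPoly b) = (b ⬝ᵥ p : ℝ) + (b ⬝ᵥ q : ℝ) * I := by
  apply Complex.ext <;> simp [linPoly, dotProduct]

theorem aeval_quadPoly_complex (A : Matrix (Fin n) (Fin n) ℝ) (p q : Fin n → ℝ) :
    aeval (fun i ↦ (p i : ℂ) + q i * I) (quadPoly A) =
      (p ⬝ᵥ A *ᵥ p - q ⬝ᵥ A *ᵥ q : ℝ) + (p ⬝ᵥ A *ᵥ q + q ⬝ᵥ A *ᵥ p : ℝ) * I := by
  apply Complex.ext <;>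
    simp [quadPoly, dotProduct, mulVec, Finset.mul_sum, ← Finset.sum_sub_distrib,
      ← Finset.sum_add_distrib] <;>
    refine Finset.sum_congr rfl fun i _ ↦ Finset.sum_congr rfl fun j _ ↦ by ring

theorem exists_ne_zero_dotProduct_eq_zero_of_two_lt {K : Type*} [Field K] (hn : 2 < n)
    (x y : Fin n → K) : ∃ v ≠ 0, x ⬝ᵥ v = 0 ∧ y ⬝ᵥ v = 0 := by
  have hker := LinearMap.ker_ne_bot_of_finrank_lt (f := (Matrix.of ![x, y]).mulVecLin)
    (by simpa using hn)
  obtain ⟨v, hv, hv0⟩ := (Submodule.ne_bot_iff _).mp hker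
  have h := LinearMap.mem_ker.mp hv
  exact ⟨v, hv0, congrFun h 0, congrFun h 1⟩

theorem eq_zero_of_dotProduct_eq_zero_of_forall {K : Type*} [Field K] {b l u : Fin n → K}
    (hbu : b ⬝ᵥ u ≠ 0) (hlu : l ⬝ᵥ u = 0) (h : ∀ w, b ⬝ᵥ w = 0 → l ⬝ᵥ w = 0) : l = 0 := by
  refine dotProduct_eq_zero l fun x ↦ ?_
  have := h ((b ⬝ᵥ u) • x - (b ⬝ᵥ x) • u) (by simp [dotProduct_sub]; ring)
  simpa [dotProduct_sub, hlu, hbu] using this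

theorem dotProduct_mulVec_comm {ι R : Type*} [Fintype ι] [CommSemiring R] {A : Matrix ι ι R}
    (hA : A.IsSymm) (x y : ι → R) :
    x ⬝ᵥ A *ᵥ y = y ⬝ᵥ A *ᵥ x := by
  rw [dotProduct_mulVec, ← mulVec_transpose, hA.eq, dotProduct_comm]

section
variable {A : Matrix (Fin n) (Fin n) ℝ} {b u v w : Fin n → ℝ}

theorem aeval_complex_eq_zero_of_orthogonal (hA : A.IsSymm) (hu : A *ᵥ u = b)
    (hv : b ⬝ᵥ v = 0) (hw : b ⬝ᵥ w = 0) (hvw : v ⬝ᵥ A *ᵥ w = 0)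
    (hnorm : v ⬝ᵥ A *ᵥ v = w ⬝ᵥ A *ᵥ w) :
    aeval (fun i ↦ ((u + v) i : ℂ) + w i * I) (C (b ⬝ᵥ u) * quadPoly A - linPoly b ^ 2) = 0 := by
  have hAu (x : Fin n → ℝ) : x ⬝ᵥ A *ᵥ u = b ⬝ᵥ x := by rw [hu, dotProduct_comm]
  have hre : (u + v) ⬝ᵥ A *ᵥ (u + v) = b ⬝ᵥ u + w ⬝ᵥ A *ᵥ w := by
    rw [mulVec_add, dotProduct_add, add_dotProduct, add_dotProduct, hAu, hAu,
      dotProduct_mulVec_comm hA u v, hAu, hv, hnorm]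
    ring
  have him : (u + v) ⬝ᵥ A *ᵥ w = 0 := by
    rw [add_dotProduct, dotProduct_mulVec_comm hA, hAu, hw, hvw, add_zero]
  simp only [map_sub, map_mul, map_pow, aeval_C, aeval_quadPoly_complex,
    aeval_linPoly_complex, dotProduct_mulVec_comm hA w, hre, him, dotProduct_add, hv, hw,
    coe_algebraMap, add_sub_cancel_right, add_zero, ofReal_zero, zero_mul]
  ring

theorem dotProduct_eq_zero_of_dvd (hA : A.IsSymm) (hu : A *ᵥ u = b) (hbu : b ⬝ᵥ u ≠ 0)
    {c : ℝ} (hc : c ≠ 0) {k m : ℕ} {l : Fin n → ℝ}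
    (hdvd : (C (b ⬝ᵥ u) * quadPoly A - linPoly b ^ 2) ∣ C c * linPoly b ^ k * linPoly l ^ m)
    (hv : b ⬝ᵥ v = 0) (hw : b ⬝ᵥ w = 0) (hvw : v ⬝ᵥ A *ᵥ w = 0)
    (hnorm : v ⬝ᵥ A *ᵥ v = w ⬝ᵥ A *ᵥ w) :
    l ⬝ᵥ (u + v) = 0 ∧ l ⬝ᵥ w = 0 := by
  have h := aeval_eq_zero_of_dvd_mul_pow hdvd
    (aeval_complex_eq_zero_of_orthogonal hA hu hv hw hvw hnorm)
    (by rw [map_mul, map_pow, aeval_C, aeval_linPoly_complex, dotProduct_add, hv, hw]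
        simp [hc, hbu])
  rw [aeval_linPoly_complex] at h
  simpa [Complex.ext_iff] using h

theorem exists_orthogonal_quadForm_eq (hn : 2 < n) (hA : A.PosDef) (b w : Fin n → ℝ) :
    ∃ v, b ⬝ᵥ v = 0 ∧ v ⬝ᵥ A *ᵥ w = 0 ∧ v ⬝ᵥ A *ᵥ v = w ⬝ᵥ A *ᵥ w := by
  obtain ⟨v, hv0, hbv, hwv⟩ := exists_ne_zero_dotProduct_eq_zero_of_two_lt hn b (A *ᵥ w)
  have hvv : 0 < v ⬝ᵥ A *ᵥ v := by simpa using hA.dotProduct_mulVec_pos hv0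
  have hww : 0 ≤ w ⬝ᵥ A *ᵥ w := by simpa using hA.posSemidef.dotProduct_mulVec_nonneg w
  set c := √(w ⬝ᵥ A *ᵥ w / v ⬝ᵥ A *ᵥ v)
  refine ⟨c • v, by simp [hbv], by simp [dotProduct_comm v, hwv], ?_⟩
  rw [mulVec_smul, dotProduct_smul, smul_dotProduct, smul_smul, smul_eq_mul, ← sq,
    Real.sq_sqrt (div_nonneg hww hvv.le), div_mul_cancel₀ _ hvv.ne']

end

/-- for `n ≥ 3`, if `b²α² - β²` divides `2(5n+1)β⁵L²` for a
linear form `L`, then `L = 0`. -/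
theorem stmt9 {n : ℕ} (hn : 3 ≤ n) (A : Matrix (Fin n) (Fin n) ℝ) (hA : A.PosDef)
    (b : Fin n → ℝ) (hb : b ≠ 0) (b2 : ℝ) (hb2 : b2 = b ⬝ᵥ A⁻¹ *ᵥ b)
    (l : Fin n → ℝ)
    (hdvd : (C b2 * quadPoly A - (linPoly b) ^ 2) ∣
      C (2 * (5 * (n : ℝ) + 1)) * (linPoly b) ^ 5 * (linPoly l) ^ 2) :
    linPoly l = 0 := by
  subst hb2
  have hsymm : A.IsSymm := (conjTranspose_eq_transpose_of_trivial A).symm.trans hA.isHermitian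
  set u := A⁻¹ *ᵥ b
  have hu : A *ᵥ u = b := by
    rw [mulVec_mulVec, mul_nonsing_inv _ ((isUnit_iff_isUnit_det A).mp hA.isUnit), one_mulVec]
  have hbu : b ⬝ᵥ u ≠ 0 := by simpa using (hA.inv.dotProduct_mulVec_pos hb).ne'
  have hc : 2 * (5 * (n : ℝ) + 1) ≠ 0 := by positivity
  have hlu : l ⬝ᵥ u = 0 := by
    simpa using (dotProduct_eq_zero_of_dvd hsymm hu hbu hc hdvd (v := 0) (w := 0)
      (by simp) (by simp) (by simp) (by simp)).1
  have hperp (w : Fin n → ℝ) (hw : b ⬝ᵥ w = 0) : l ⬝ᵥ w = 0 := by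
    obtain ⟨v, hv, hvw, hnorm⟩ := exists_orthogonal_quadForm_eq hn hA b w
    exact (dotProduct_eq_zero_of_dvd hsymm hu hbu hc hdvd hv hw hvw hnorm).2
  simp [eq_zero_of_dotProduct_eq_zero_of_forall hbu hlu hperp, linPoly]
end

section
/- Let $\mu \le 0$ be a constant, and on $\mathbb{R}^n$ define $\alpha = \frac{\sqrt{(1+\mu|x|^2)|y|^2 - \mu\langle x,y\rangle^2}}{1+\mu|x|^2}$ and $\beta = \frac{\lambda\langle x,y\rangle + (1+\mu|x|^2)\langle a,y\rangle - \mu\langle a,x\rangle\langle x,y\rangle}{(1+\mu|x|^2)^{3/2}}$ for a constant $\lambda \in \mathbb{R}$ and constant vector $a \in \mathbb{R}^n$ with $\lambda^2 + \mu|a|^2 = 0$. Then the length $b$ of $\beta$ with respect to $\alpha$ satisfies $b^2 = \frac{\lambda^2|x|^2 + 2\lambda\langle a,x\rangle + (1+\mu|x|^2)|a|^2 - \mu\langle a,x\rangle^2}{1+\mu|x|^2}$, and the conformal factor $c(x)$ of $\beta$ (defined by $r_{00} = c\,\alpha^2$ with $r_{ij}$ the symmetrized covariant derivative of $\beta$ with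 respect to $\alpha$) satisfies $c^2 = -\mu b^2$. -/
open Matrix

noncomputable section

/-- `|x|²`. -/
def nsq {n : ℕ} (x : Fin n → ℝ) : ℝ := ∑ i, x i ^ 2

/-- `⟨x, y⟩`. -/
def ipr {n : ℕ} (x y : Fin n → ℝ) : ℝ := ∑ i, x i * y i

/-- The matrix of the metric `α² = ((1+μ|x|²)|y|² - μ⟨x,y⟩²)/(1+μ|x|²)²`
of constant sectional curvature `μ` in the projective model. -/
def aMat {n : ℕ} (μ : ℝ) (x : Fin n → ℝ) : Matrix (Fin n) (Fin n) ℝ :=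
  Matrix.of fun i j =>
    ((1 + μ * nsq x) * (if i = j then (1 : ℝ) else 0) - μ * x i * x j) /
      (1 + μ * nsq x) ^ 2

/-- Coefficients `b_i(x)` of the 1-form
`β = (λ⟨x,y⟩ + (1+μ|x|²)⟨a,y⟩ - μ⟨a,x⟩⟨x,y⟩)/(1+μ|x|²)^{3/2}`. -/
def bCov {n : ℕ} (μ lam : ℝ) (a : Fin n → ℝ) (x : Fin n → ℝ) (i : Fin n) : ℝ :=
  (lam * x i + (1 + μ * nsq x) * a i - μ * ipr a x * x i) /
    ((1 + μ * nsq x) * Real.sqrt (1 + μ * nsq x))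

/-- Partial derivative `∂f/∂xⁱ`. -/
def pd {n : ℕ} (i : Fin n) (f : (Fin n → ℝ) → ℝ) (x : Fin n → ℝ) : ℝ :=
  fderiv ℝ f x (Pi.single i 1)

/-- Christoffel symbols `Γ^k_{ij}` of the Levi-Civita connection of `aMat μ`. -/
def christoffel {n : ℕ} (μ : ℝ) (x : Fin n → ℝ) (k i j : Fin n) : ℝ :=
  (1 / 2) * ∑ l, (aMat μ x)⁻¹ k l *
    (pd i (fun z => aMat μ z j l) x + pd j (fun z => aMat μ z i l) x -
      pd l (fun z => aMat μ z i j) x)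

/-- The covariant derivative `b_{i|j}` of `β` with respect to `α`. -/
def covDer {n : ℕ} (μ lam : ℝ) (a : Fin n → ℝ) (x : Fin n → ℝ) (i j : Fin n) : ℝ :=
  pd j (fun z => bCov μ lam a z i) x - ∑ k, christoffel μ x k i j * bCov μ lam a x k

/-- `r_{ij} = ½(b_{i|j} + b_{j|i})`. -/
def rTensor {n : ℕ} (μ lam : ℝ) (a : Fin n → ℝ) (x : Fin n → ℝ) (i j : Fin n) : ℝ :=
  (covDer μ lam a x i j + covDer μ lam a x j i) / 2

/-- `b² = a^{ij} b_i b_j`. -/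
def bNormSq {n : ℕ} (μ lam : ℝ) (a : Fin n → ℝ) (x : Fin n → ℝ) : ℝ :=
  ∑ i, ∑ j, (aMat μ x)⁻¹ i j * bCov μ lam a x i * bCov μ lam a x j

/-!
The inverse metric is `(1 + μ|x|²)(δ + μ x xᵀ)` and the Christoffel symbols are
`Γᵏᵢⱼ = -μ (xⱼ δᵏᵢ + xᵢ δᵏⱼ) / (1 + μ|x|²)`. In `b_{i|j} = ∂ⱼ bᵢ - Γᵏᵢⱼ bₖ` every term involving
`a` cancels, leaving `b_{i|j} = c aᵢⱼ` with `c = (λ - μ⟨a,x⟩) / √(1 + μ|x|²)`. Evaluating `b²`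
with the inverse metric gives the stated formula and the identity `c² + μ b² = λ² + μ|a|²`.
-/

lemma ipr_eq_dotProduct {n : ℕ} (x y : Fin n → ℝ) : ipr x y = x ⬝ᵥ y := rfl

lemma nsq_eq_dotProduct {n : ℕ} (x : Fin n → ℝ) : nsq x = x ⬝ᵥ x := by
  simp only [nsq, dotProduct, sq]

section PartialDerivatives

variable {n : ℕ}

def dotCLM {ι : Type*} [Fintype ι] (v : ι → ℝ) : (ι → ℝ) →L[ℝ] ℝ :=
  LinearMap.toContinuousLinearMap (dotProductBilin ℝ ℝ v)

lemma dotCLM_apply {ι : Type*} [Fintype ι] (v w : ι → ℝ) : dotCLM v w = v ⬝ᵥ w := rfl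

lemma hasFDerivAt_ipr (a x : Fin n → ℝ) : HasFDerivAt (fun z => ipr a z) (dotCLM a) x :=
  (dotCLM a).hasFDerivAt

lemma hasFDerivAt_nsq (x : Fin n → ℝ) : HasFDerivAt nsq ((2 : ℝ) • dotCLM x) x := by
  refine (HasFDerivAt.fun_sum (u := Finset.univ) fun j _ =>
    (hasFDerivAt_apply (𝕜 := ℝ) j x).pow 2).congr_fderiv ?_
  ext v
  simp only [_root_.sum_apply, _root_.smul_apply, ContinuousLinearMap.proj_apply, smul_eq_mul,
    dotCLM_apply, dotProduct, Finset.mul_sum]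
  exact Finset.sum_congr rfl fun j _ => by ring

variable {f g : (Fin n → ℝ) → ℝ} {f' g' : (Fin n → ℝ) →L[ℝ] ℝ} {x : Fin n → ℝ}

lemma pd_eq_of_hasFDerivAt (i : Fin n) (hf : HasFDerivAt f f' x) :
    pd i f x = f' (Pi.single i 1) := by
  rw [pd, hf.fderiv]

lemma pd_div_of_hasFDerivAt (i : Fin n) (hf : HasFDerivAt f f' x) (hg : HasFDerivAt g g' x)
    (hx : g x ≠ 0) :
    pd i (fun z => f z / g z) x =
      (f' (Pi.single i 1) * g x - f x * g' (Pi.single i 1)) / g x ^ 2 := by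
  have hinv : HasFDerivAt (fun z => (g z)⁻¹) (-(g x ^ 2)⁻¹ • g') x :=
    (hasDerivAt_inv hx).comp_hasFDerivAt x hg
  simp_rw [div_eq_mul_inv]
  rw [pd_eq_of_hasFDerivAt i (hf.fun_mul hinv)]
  simp only [_root_.add_apply, _root_.smul_apply, smul_eq_mul]
  field_simp
  ring

end PartialDerivatives

section Metric

variable {n : ℕ} (μ : ℝ) (x : Fin n → ℝ)

lemma aMat_eq_smul :
    aMat μ x = ((1 + μ * nsq x) ^ 2)⁻¹ • ((1 + μ * nsq x) • 1 - μ • vecMulVec x x) := by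
  ext i j
  simp [aMat, Matrix.one_apply, vecMulVec_apply, div_eq_inv_mul, mul_assoc]

lemma aMat_symm (i j : Fin n) : aMat μ x j i = aMat μ x i j := by
  simp only [aMat, of_apply, eq_comm (a := j)]
  ring

lemma aMat_inv (hs : 1 + μ * nsq x ≠ 0) :
    (aMat μ x)⁻¹ = (1 + μ * nsq x) • (1 + μ • vecMulVec x x) := by
  refine inv_eq_right_inv ?_
  have hV : vecMulVec x x * vecMulVec x x = nsq x • vecMulVec x x := by
    rw [vecMulVec_mul_vecMulVec, ← nsq_eq_dotProduct, vecMulVec_smul]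
  simp only [aMat_eq_smul, smul_mul_assoc, mul_smul_comm, sub_mul, mul_add, Matrix.one_mul,
    Matrix.mul_one, hV]
  match_scalars <;> field_simp
  ring

lemma aMat_inv_mulVec (hs : 1 + μ * nsq x ≠ 0) (w : Fin n → ℝ) :
    (aMat μ x)⁻¹ *ᵥ w = (1 + μ * nsq x) • (w + (μ * ipr x w) • x) := by
  rw [aMat_inv μ x hs, smul_mulVec, add_mulVec, one_mulVec, smul_mulVec, vecMulVec_mulVec,
    op_smul_eq_smul, ipr_eq_dotProduct, smul_smul]

end Metric

section Derivatives

variable {n : ℕ} (μ : ℝ) {x : Fin n → ℝ}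

lemma hasFDerivAt_one_add_mul_nsq (x : Fin n → ℝ) :
    HasFDerivAt (fun z => 1 + μ * nsq z) (μ • (2 : ℝ) • dotCLM x) x :=
  ((hasFDerivAt_nsq x).const_mul μ).const_add 1

lemma pd_aMat (hs : 1 + μ * nsq x ≠ 0) (i j l : Fin n) :
    pd i (fun z => aMat μ z j l) x =
      (-μ * (1 + μ * nsq x) * ((if j = i then 1 else 0) * x l + (if l = i then 1 else 0) * x j)
        - 2 * μ * (1 + μ * nsq x) * x i * (if j = l then 1 else 0)
        + 4 * μ ^ 2 * x i * x j * x l) / (1 + μ * nsq x) ^ 3 := by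
  have hs' := hasFDerivAt_one_add_mul_nsq μ x
  have hnum : HasFDerivAt (fun z => (1 + μ * nsq z) * (if j = l then 1 else 0) - μ * z j * z l)
      _ x := (hs'.mul_const (if j = l then (1 : ℝ) else 0)).fun_sub
    (((hasFDerivAt_apply (𝕜 := ℝ) j x).const_mul μ).fun_mul (hasFDerivAt_apply (𝕜 := ℝ) l x))
  rw [show (fun z => aMat μ z j l) = fun z => _ / _ from rfl,
    pd_div_of_hasFDerivAt i hnum (hs'.pow 2) (pow_ne_zero 2 hs)]
  simp only [_root_.sub_apply, _root_.add_apply, _root_.smul_apply,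
    ContinuousLinearMap.proj_apply, dotCLM_apply, dotProduct_single_one, Pi.single_apply,
    smul_eq_mul]
  field_simp
  ring

lemma pd_bCov (lam : ℝ) (a : Fin n → ℝ) (hs : 0 < 1 + μ * nsq x) (i j : Fin n) :
    pd j (fun z => bCov μ lam a z i) x =
      ((1 + μ * nsq x) * ((lam - μ * ipr a x) * (if i = j then 1 else 0) - μ * a j * x i
          + 2 * μ * x j * a i)
        - 3 * μ * x j * ((lam - μ * ipr a x) * x i + (1 + μ * nsq x) * a i))
        / ((1 + μ * nsq x) ^ 2 * Real.sqrt (1 + μ * nsq x)) := by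
  have hs' := hasFDerivAt_one_add_mul_nsq μ x
  have hnum : HasFDerivAt (fun z => lam * z i + (1 + μ * nsq z) * a i - μ * ipr a z * z i) _ x :=
    (((hasFDerivAt_apply (𝕜 := ℝ) i x).const_mul lam).fun_add (hs'.mul_const (a i))).fun_sub
      (((hasFDerivAt_ipr a x).const_mul μ).fun_mul (hasFDerivAt_apply (𝕜 := ℝ) i x))
  have hden := hs'.fun_mul (hs'.sqrt hs.ne')
  have ht := Real.sqrt_pos.2 hs
  rw [show (fun z => bCov μ lam a z i) = fun z => _ / _ from rfl,
    pd_div_of_hasFDerivAt j hnum hden (mul_pos hs ht).ne']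
  simp only [_root_.sub_apply, _root_.add_apply, _root_.smul_apply,
    ContinuousLinearMap.proj_apply, dotCLM_apply, dotProduct_single_one, Pi.single_apply,
    smul_eq_mul]
  field_simp
  rw [Real.sq_sqrt hs.le]
  ring

end Derivatives

section Christoffel

variable {n : ℕ} (μ : ℝ) {x : Fin n → ℝ}

lemma pd_aMat_bracket (hs : 1 + μ * nsq x ≠ 0) (i j : Fin n) :
    (fun l => pd i (fun z => aMat μ z j l) x + pd j (fun z => aMat μ z i l) x
      - pd l (fun z => aMat μ z i j) x) =
      (-2 * μ / (1 + μ * nsq x) ^ 2) • (x j • Pi.single i 1 + x i • Pi.single j 1)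
        + (4 * μ ^ 2 * x i * x j / (1 + μ * nsq x) ^ 3) • x := by
  funext l
  simp only [pd_aMat μ hs, Pi.add_apply, Pi.smul_apply, Pi.single_apply, smul_eq_mul]
  split_ifs <;> subst_vars <;> simp_all <;> field_simp <;> ring

lemma christoffel_eq (hs : 1 + μ * nsq x ≠ 0) (k i j : Fin n) :
    christoffel μ x k i j =
      -μ * (x j * (if k = i then 1 else 0) + x i * (if k = j then 1 else 0)) / (1 + μ * nsq x) := by
  have h : christoffel μ x k i j = (1 / 2) * ((aMat μ x)⁻¹ *ᵥ fun l =>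
      pd i (fun z => aMat μ z j l) x + pd j (fun z => aMat μ z i l) x
        - pd l (fun z => aMat μ z i j) x) k := rfl
  rw [h, pd_aMat_bracket μ hs, aMat_inv_mulVec μ x hs]
  simp only [Pi.add_apply, Pi.smul_apply, smul_eq_mul, Pi.single_apply, ipr_eq_dotProduct,
    dotProduct_add, dotProduct_smul, dotProduct_single_one, ← nsq_eq_dotProduct]
  field_simp
  ring

end Christoffel

section Conformal

variable {n : ℕ} (μ lam : ℝ) (a : Fin n → ℝ) {x : Fin n → ℝ}

def conformalFactor (x : Fin n → ℝ) : ℝ :=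
  (lam - μ * ipr a x) / Real.sqrt (1 + μ * nsq x)

lemma sum_christoffel_mul_bCov (hs : 1 + μ * nsq x ≠ 0) (i j : Fin n) :
    ∑ k, christoffel μ x k i j * bCov μ lam a x k =
      -μ * (x j * bCov μ lam a x i + x i * bCov μ lam a x j) / (1 + μ * nsq x) := by
  simp only [christoffel_eq μ hs, div_mul_eq_mul_div, ← Finset.sum_div, mul_add, add_mul,
    Finset.sum_add_distrib, mul_ite, ite_mul, mul_one, mul_zero, zero_mul, Finset.sum_ite_eq',
    Finset.mem_univ, if_true]
  ring

lemma covDer_eq (hs : 0 < 1 + μ * nsq x) (i j : Fin n) :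
    covDer μ lam a x i j = conformalFactor μ lam a x * aMat μ x i j := by
  rw [covDer, pd_bCov μ lam a hs, sum_christoffel_mul_bCov μ lam a hs.ne']
  have ht := Real.sqrt_pos.2 hs
  simp only [conformalFactor, bCov, aMat, of_apply]
  field_simp
  ring

lemma rTensor_eq (hs : 0 < 1 + μ * nsq x) (i j : Fin n) :
    rTensor μ lam a x i j = conformalFactor μ lam a x * aMat μ x i j := by
  rw [rTensor, covDer_eq μ lam a hs, covDer_eq μ lam a hs, aMat_symm]
  ring

lemma bCov_eq_smul_add (hs : 0 < 1 + μ * nsq x) :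
    bCov μ lam a x = ((lam - μ * ipr a x) / ((1 + μ * nsq x) * Real.sqrt (1 + μ * nsq x))) • x
      + (Real.sqrt (1 + μ * nsq x))⁻¹ • a := by
  have ht := Real.sqrt_pos.2 hs
  funext i
  simp only [bCov, Pi.add_apply, Pi.smul_apply, smul_eq_mul]
  field_simp
  ring

lemma bNormSq_eq_dotProduct (x : Fin n → ℝ) :
    bNormSq μ lam a x = bCov μ lam a x ⬝ᵥ ((aMat μ x)⁻¹ *ᵥ bCov μ lam a x) := by
  simp only [bNormSq, dotProduct, mulVec, Finset.mul_sum]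
  exact Finset.sum_congr rfl fun i _ => Finset.sum_congr rfl fun j _ => by ring

lemma bNormSq_eq (hs : 0 < 1 + μ * nsq x) :
    bNormSq μ lam a x =
      (lam ^ 2 * nsq x + 2 * lam * ipr a x + (1 + μ * nsq x) * nsq a - μ * ipr a x ^ 2)
        / (1 + μ * nsq x) := by
  have ht := Real.sqrt_pos.2 hs
  rw [bNormSq_eq_dotProduct, aMat_inv_mulVec μ x hs.ne', bCov_eq_smul_add μ lam a hs]
  simp only [ipr_eq_dotProduct, dotProduct_add, add_dotProduct,
    dotProduct_smul, smul_dotProduct, smul_eq_mul, dotProduct_comm a x, ← nsq_eq_dotProduct]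
  field_simp
  rw [Real.sq_sqrt hs.le]
  ring

lemma conformalFactor_sq_add_mul_bNormSq (hs : 0 < 1 + μ * nsq x) :
    conformalFactor μ lam a x ^ 2 + μ * bNormSq μ lam a x = lam ^ 2 + μ * nsq a := by
  rw [conformalFactor, bNormSq_eq μ lam a hs, div_pow, Real.sq_sqrt hs.le]
  field_simp
  ring

end Conformal

theorem stmt18_general {n : ℕ} (μ lam : ℝ) (a : Fin n → ℝ)
    (hla : lam ^ 2 + μ * nsq a = 0) :
    ∃ c : (Fin n → ℝ) → ℝ, ∀ x : Fin n → ℝ, 0 < 1 + μ * nsq x →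
      (bNormSq μ lam a x =
        (lam ^ 2 * nsq x + 2 * lam * ipr a x + (1 + μ * nsq x) * nsq a -
          μ * ipr a x ^ 2) / (1 + μ * nsq x)) ∧
      (∀ i j, rTensor μ lam a x i j = c x * aMat μ x i j) ∧
      (c x) ^ 2 = -μ * bNormSq μ lam a x :=
  ⟨conformalFactor μ lam a, fun _ hs => ⟨bNormSq_eq μ lam a hs, rTensor_eq μ lam a hs,
    by linear_combination conformalFactor_sq_add_mul_bNormSq μ lam a hs + hla⟩⟩

/-- for `μ ≤ 0`, `λ² + μ|a|² = 0`, the closing example of the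
paper: the length `b` of `β` w.r.t. `α` is given by the stated formula, `β` is
conformal (`r_{ij} = c·a_{ij}`), and the conformal factor satisfies
`c² = -μ b²`. -/
theorem stmt18 {n : ℕ} (μ lam : ℝ) (hμ : μ ≤ 0) (a : Fin n → ℝ)
    (hla : lam ^ 2 + μ * nsq a = 0) :
    ∃ c : (Fin n → ℝ) → ℝ, ∀ x : Fin n → ℝ, 0 < 1 + μ * nsq x →
      (bNormSq μ lam a x =
        (lam ^ 2 * nsq x + 2 * lam * ipr a x + (1 + μ * nsq x) * nsq a -
          μ * ipr a x ^ 2) / (1 + μ * nsq x)) ∧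
      (∀ i j, rTensor μ lam a x i j = c x * aMat μ x i j) ∧
      (c x) ^ 2 = -μ * bNormSq μ lam a x :=
  stmt18_general μ lam a hla

end
end
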